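/- Let V be an F-vector space with dual V* and X = V ⊕ V* with symplectic form ⟨v+v*, w+w*⟩ = w*(v) - v*(w). Let P be the set of symplectic automorphisms g = [[α, β],[γ, δ]] of X with γ = 0 (in block form relative to the decomposition, with V* g commensurable to V*). Then P is a subgroup of Sp(X, V*), and for p₁, p₂ ∈ P, the operators (T(p)f)(x) = ψ(½⟨xα_p, xβ_p⟩) f(xα_p) on Schwartz functions satisfy T(p₁)T(p₂) = T(p₁p₂). -/
import Mathlib


/-- Let `V` be an `F`-vector space with dual `V*` and `X = V ⊕ V*` with the
symplectic form `⟨v+v*, w+w*⟩ = w*(v) - v*(w)`. Let `P` be the set of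
symplectic automorphisms `g = [[α,β],[γ,δ]]` of `X` (block form relative to
the decomposition) with `γ = 0`, i.e. sending `V*` into `V*`. Then `P` is a
subgroup (containing the identity, closed under composition and inverses), and
for `p₁, p₂ ∈ P` the operators
`(T(p)f)(x) = ψ(½⟨xα_p, xβ_p⟩) f(xα_p)` on functions satisfy
`T(p₁)T(p₂) = T(p₁p₂)`. (Composition convention: the group acts on the right,
so `x(p₁p₂) = (x p₁) p₂` and `p₁ p₂` is `p₁.trans p₂`.) -/
theorem statement19 {F V : Type*} [Field F] (h2 : (2 : F) ≠ 0)
    [AddCommGroup V] [Module F V]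
    (ψ : F → ℂ) (hψ : ∀ a b : F, ψ (a + b) = ψ a * ψ b) :
    let X := V × Module.Dual F V
    let ω : X → X → F := fun p q => q.2 p.1 - p.2 q.1
    let P : Set (X ≃ₗ[F] X) :=
      {g | (∀ p q : X, ω (g p) (g q) = ω p q) ∧
        ∀ φ : Module.Dual F V, (g (0, φ)).1 = 0}
    let T : (X ≃ₗ[F] X) → (V → ℂ) → V → ℂ := fun g f x =>
      ψ ((2 : F)⁻¹ * (g (x, 0)).2 ((g (x, 0)).1)) * f ((g (x, 0)).1)
    (LinearEquiv.refl F X ∈ P) ∧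
    (∀ g₁ ∈ P, ∀ g₂ ∈ P, g₁.trans g₂ ∈ P) ∧
    (∀ g ∈ P, g.symm ∈ P) ∧
    (∀ p₁ ∈ P, ∀ p₂ ∈ P, ∀ f : V → ℂ, T p₁ (T p₂ f) = T (p₁.trans p₂) f) := by
  intro X ω P T
  refine ⟨⟨fun p q => rfl, fun φ => rfl⟩, ?_, ?_, ?_⟩
  · rintro g₁ ⟨hg₁, hg₁0⟩ g₂ ⟨hg₂, hg₂0⟩
    refine ⟨fun p q => by simpa using (hg₂ (g₁ p) (g₁ q)).trans (hg₁ p q), fun φ => ?_⟩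
    have h : g₁ (0, φ) = ((0 : V), (g₁ (0, φ)).2) := Prod.ext (hg₁0 φ) rfl
    show (g₂ (g₁ (0, φ))).1 = 0
    rw [h]
    exact hg₂0 _
  · rintro g ⟨hg, hg0⟩
    have hpres : ∀ p q : X, ω (g.symm p) (g.symm q) = ω p q := by
      intro p q
      have := hg (g.symm p) (g.symm q)
      simpa using this.symm
    refine ⟨hpres, fun φ => ?_⟩
    rw [← Module.forall_dual_apply_eq_zero_iff F]
    intro χ
    have h1 := hpres (g ((0 : V), χ)) ((0 : V), φ)
    rw [g.symm_apply_apply] at h1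
    have h : g ((0 : V), χ) = ((0 : V), (g ((0 : V), χ)).2) := Prod.ext (hg0 χ) rfl
    rw [h] at h1
    simp only [ω] at h1
    simp only [map_zero] at h1
    -- h1 : (g.symm (0,φ)).2 0 - χ (g.symm (0,φ)).1 = φ 0 - _ 0
    simpa using h1
  · rintro p₁ ⟨hp₁, hp₁0⟩ p₂ ⟨hp₂, hp₂0⟩ f
    funext x
    simp only [T, LinearEquiv.trans_apply]
    set A := p₁ ((x : V), (0 : Module.Dual F V)) with hA
    have hAsplit : ((A.1, (0 : Module.Dual F V)) : X) + (((0 : V), A.2) : X) = A := by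
      ext <;> simp
    have hsplit : p₂ A = p₂ ((A.1, (0 : Module.Dual F V)) : X)
        + p₂ (((0 : V), A.2) : X) := by
      rw [← map_add, hAsplit]
    set B := p₂ ((A.1, (0 : Module.Dual F V)) : X) with hB
    set C := p₂ (((0 : V), A.2) : X) with hC
    have hC1 : C.1 = 0 := hp₂0 A.2
    have hkey : A.2 A.1 = C.2 B.1 := by
      have h := hp₂ ((A.1, (0 : Module.Dual F V)) : X) (((0 : V), A.2) : X)
      simp only [← hB, ← hC, ω] at h
      simp only [hC1, map_zero] at h
      simpa using h.symm
    have h1 : (p₂ A).1 = B.1 := by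
      rw [hsplit]; show B.1 + C.1 = B.1; rw [hC1, add_zero]
    have h2 : (p₂ A).2 = B.2 + C.2 := by rw [hsplit]; rfl
    rw [h1, h2]
    have hexp : (2 : F)⁻¹ * (B.2 + C.2) B.1
        = (2 : F)⁻¹ * A.2 A.1 + (2 : F)⁻¹ * B.2 B.1 := by
      simp only [LinearMap.add_apply, hkey]; ring
    rw [hexp, hψ, mul_assoc]
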